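/- Let (n_k) be lacunary with ratio α > 1 and σ_n the Fejér mean operator on L²(ℝ). For any bounded sequence (c_k), the operator G f = ∑_{k=1}^{∞} c_k (σ_{n_{k+1}} f − σ_{n_k} f) is well-defined on L²(ℝ) and satisfies a strong type (2,2) inequality: ‖G f‖₂ ≤ C ‖(c_k)‖_∞ ‖f‖₂ for some constant C depending only on α. -/

import Mathlib

open MeasureTheory FourierTransform

/-- Fejér multiplier symbol. -/
noncomputable def fejerSymbol (n : ℕ) (x : ℝ) : ℝ := max 0 (1 - |x| / (n + 1))

/-!
On the Fourier side, the block `∑_{a<k≤b} c_k (σ_{n_{k+1}} - σ_{n_k})` is the multiplier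
`∑ c_k (φ_{k+1} - φ_k)` with `φ_k = K̂_{n_k}`. The symbols increase in `k` and stay in `[0, 1]`,
so the sum telescopes to the pointwise bound `sup |c| · (1 - φ_{a+1})`. By Plancherel the block
has norm at most `sup |c| · ‖(1 - φ_{a+1}) F f‖₂`, which tends to `0` by dominated convergence
because `n_k → ∞`. Hence the partial sums are Cauchy, and their limit has norm at most
`sup |c| · ‖f‖₂`, i.e. `C = 1`.
-/

open Filter Finset Topology
open scoped ENNReal

theorem norm_sum_Ioc_sub_smul_le {E : Type*} [SeminormedAddCommGroup E] [NormedSpace ℝ E]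
    {φ : ℕ → ℝ} (hφ : Monotone φ) (hφ_le : ∀ k, φ k ≤ 1) {v : ℕ → E} {M : ℝ}
    (hv : ∀ k, ‖v k‖ ≤ M) (a b : ℕ) :
    ‖∑ k ∈ Ioc a b, (φ (k + 1) - φ k) • v k‖ ≤ M * (1 - φ (a + 1)) := by
  have hM : 0 ≤ M := (norm_nonneg _).trans (hv 0)
  have hstep : ∀ k, 0 ≤ φ (k + 1) - φ k := fun k => sub_nonneg.2 (hφ k.le_succ)
  calc ‖∑ k ∈ Ioc a b, (φ (k + 1) - φ k) • v k‖
      ≤ ∑ k ∈ Ioc a b, M * (φ (k + 1) - φ k) := by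
        refine norm_sum_le_of_le _ fun k _ => ?_
        rw [norm_smul, Real.norm_of_nonneg (hstep k), mul_comm]
        exact mul_le_mul_of_nonneg_right (hv k) (hstep k)
    _ ≤ M * (1 - φ (a + 1)) := by
        rw [← mul_sum]
        refine mul_le_mul_of_nonneg_left ?_ hM
        rcases le_or_gt a b with hab | hba
        · rw [← Ico_add_one_add_one_eq_Ioc, sum_Ico_sub (fun k => φ k) (by omega)]
          linarith [hφ_le (b + 1)]
        · simp [Ioc_eq_empty_of_le hba.le, hφ_le (a + 1)]

theorem cauchySeq_sum_Ioc_of_enorm_le {E : Type*} [SeminormedAddCommGroup E] {x : ℕ → E}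
    {t : ℕ → ℝ≥0∞} (ht : Tendsto t atTop (𝓝 0)) (hx : ∀ a b, ‖∑ k ∈ Ioc a b, x k‖ₑ ≤ t a) :
    CauchySeq fun N => ∑ k ∈ Ioc 0 N, x k := by
  refine EMetric.cauchySeq_iff'.2 fun ε hε => ?_
  obtain ⟨N, hN⟩ := (ht.eventually (gt_mem_nhds hε)).exists
  refine ⟨N, fun b hb => ?_⟩
  rw [edist_eq_enorm_sub, ← sum_Ioc_consecutive _ N.zero_le hb, add_sub_cancel_left]
  exact (hx N b).trans_lt hN

theorem tendsto_eLpNorm_zero_of_dominated {X E : Type*} [MeasurableSpace X] {μ : Measure X}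
    [NormedAddCommGroup E] {p : ℝ≥0∞} (hp : p ≠ 0) (hp_top : p ≠ ∞) {F : ℕ → X → E}
    {g : X → ℝ} (hF : ∀ j, AEStronglyMeasurable (F j) μ) (hg : MemLp g p μ)
    (hbound : ∀ j, ∀ᵐ x ∂μ, ‖F j x‖ ≤ g x)
    (hlim : ∀ᵐ x ∂μ, Tendsto (fun j => F j x) atTop (𝓝 0)) :
    Tendsto (fun j => eLpNorm (F j) p μ) atTop (𝓝 0) := by
  have hp_pos : 0 < p.toReal := ENNReal.toReal_pos hp hp_top
  simp_rw [eLpNorm_eq_lintegral_rpow_enorm_toReal hp hp_top]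
  have hint : Tendsto (fun j => ∫⁻ x, ‖F j x‖ₑ ^ p.toReal ∂μ) atTop (𝓝 0) := by
    simpa using tendsto_lintegral_of_dominated_convergence' (f := 0) (fun x => ‖g x‖ₑ ^ p.toReal)
      (fun j => (hF j).enorm.pow_const _)
      (fun j => (hbound j).mono fun x hx => ENNReal.rpow_le_rpow
        (enorm_le_iff_norm_le.2 (hx.trans (Real.le_norm_self _))) hp_pos.le)
      (lintegral_rpow_enorm_lt_top_of_eLpNorm_lt_top hp hp_top hg.2).ne
      (hlim.mono fun x hx => by
        have := ((continuous_enorm.tendsto 0).comp hx).ennrpow_const p.toReal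
        simpa [Function.comp_def, ENNReal.zero_rpow_of_pos hp_pos] using this)
  simpa [ENNReal.zero_rpow_of_pos (inv_pos.2 hp_pos)] using hint.ennrpow_const p.toReal⁻¹

section Multiplier

variable {X Y : Type*} [MeasurableSpace X] [MeasurableSpace Y] {μ : Measure X} {ν : Measure Y}
  {p : ℝ≥0∞} [Fact (1 ≤ p)]

def IsMultiplier (F : Lp ℂ p μ →ₗᵢ[ℂ] Lp ℂ p ν) (T : Lp ℂ p μ →ₗ[ℂ] Lp ℂ p μ) (m : Y → ℂ) :
    Prop :=
  ∀ f, (F (T f) : Y → ℂ) =ᵐ[ν] fun y => m y * F f y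

namespace IsMultiplier

variable {F : Lp ℂ p μ →ₗᵢ[ℂ] Lp ℂ p ν} {S T : Lp ℂ p μ →ₗ[ℂ] Lp ℂ p μ} {m m' : Y → ℂ}

theorem zero : IsMultiplier F 0 0 := fun f => by
  simpa [Pi.zero_def] using Lp.coeFn_zero ℂ p ν

theorem add (hS : IsMultiplier F S m) (hT : IsMultiplier F T m') :
    IsMultiplier F (S + T) (m + m') := fun f => by
  filter_upwards [Lp.coeFn_add (F (S f)) (F (T f)), hS f, hT f] with y hy hSy hTy
  rw [LinearMap.add_apply, map_add, hy, Pi.add_apply, hSy, hTy, Pi.add_apply, add_mul]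

theorem sub (hS : IsMultiplier F S m) (hT : IsMultiplier F T m') :
    IsMultiplier F (S - T) (m - m') := fun f => by
  filter_upwards [Lp.coeFn_sub (F (S f)) (F (T f)), hS f, hT f] with y hy hSy hTy
  rw [LinearMap.sub_apply, map_sub, hy, Pi.sub_apply, hSy, hTy, Pi.sub_apply, sub_mul]

theorem const_smul (c : ℂ) (hT : IsMultiplier F T m) : IsMultiplier F (c • T) (c • m) :=
  fun f => by
  filter_upwards [Lp.coeFn_smul c (F (T f)), hT f] with y hy hTy
  rw [LinearMap.smul_apply, map_smul, hy, Pi.smul_apply, hTy, Pi.smul_apply, smul_eq_mul,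
    smul_eq_mul, mul_assoc]

theorem sum {ι : Type*} (s : Finset ι) {T : ι → Lp ℂ p μ →ₗ[ℂ] Lp ℂ p μ} {m : ι → Y → ℂ}
    (hT : ∀ i ∈ s, IsMultiplier F (T i) (m i)) :
    IsMultiplier F (∑ i ∈ s, T i) (∑ i ∈ s, m i) := by
  classical
  induction s using Finset.induction_on with
  | empty => simpa using zero
  | insert i s hi ih =>
    rw [sum_insert hi, sum_insert hi]
    exact (hT i (mem_insert_self i s)).add (ih fun j hj => hT j (mem_insert_of_mem hj))

theorem enorm_le (hT : IsMultiplier F T m) {w : Y → ℝ} (hw : ∀ y, ‖m y‖ ≤ w y) (f : Lp ℂ p μ) :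
    ‖T f‖ₑ ≤ eLpNorm (fun y => w y * ‖F f y‖) p ν := by
  rw [← F.enorm_map, Lp.enorm_def, eLpNorm_congr_ae (hT f)]
  refine eLpNorm_mono_real fun y => ?_
  rw [norm_mul]
  exact mul_le_mul_of_nonneg_right (hw y) (norm_nonneg _)

theorem norm_le (hT : IsMultiplier F T m) {M : ℝ} (hm : ∀ y, ‖m y‖ ≤ M) (f : Lp ℂ p μ) :
    ‖T f‖ ≤ M * ‖f‖ := by
  rw [← F.norm_map, ← F.norm_map f]
  refine Lp.norm_le_mul_norm_of_ae_le_mul ((hT f).mono fun y hy => ?_)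
  rw [hy, norm_mul]
  exact mul_le_mul_of_nonneg_right (hm y) (norm_nonneg _)

end IsMultiplier

section BlockSums

variable {F : Lp ℂ p μ →ₗᵢ[ℂ] Lp ℂ p ν} {T : ℕ → Lp ℂ p μ →ₗ[ℂ] Lp ℂ p μ} {ψ : ℕ → Y → ℝ}
  (hT : ∀ k, IsMultiplier F (T k) fun y => ψ k y) (hψ_mono : ∀ y, Monotone (ψ · y))
  (hψ_le_one : ∀ k y, ψ k y ≤ 1) {c : ℕ → ℂ} {M : ℝ} (hc : ∀ k, ‖c k‖ ≤ M)
include hT hψ_mono hψ_le_one hc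

theorem exists_isMultiplier_sum_Ioc_smul_sub (a b : ℕ) :
    ∃ m : Y → ℂ, IsMultiplier F (∑ k ∈ Ioc a b, c k • (T (k + 1) - T k)) m ∧
      ∀ y, ‖m y‖ ≤ M * (1 - ψ (a + 1) y) := by
  refine ⟨_, IsMultiplier.sum _ fun k _ => ((hT (k + 1)).sub (hT k)).const_smul (c k), fun y => ?_⟩
  have := norm_sum_Ioc_sub_smul_le (hψ_mono y) (hψ_le_one · y) hc a b
  refine (le_of_eq ?_).trans this
  rw [Finset.sum_apply]
  congr 1
  refine sum_congr rfl fun k _ => ?_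
  simp [Complex.real_smul, mul_comm]

theorem exists_tendsto_sum_Ioc_smul_sub (hp : p ≠ ∞) (hψ_nonneg : ∀ k y, 0 ≤ ψ k y)
    (hψ_meas : ∀ k, Measurable (ψ k)) (hψ_lim : ∀ y, Tendsto (ψ · y) atTop (𝓝 1))
    (f : Lp ℂ p μ) :
    ∃ g, Tendsto (fun N => ∑ k ∈ Ioc 0 N, c k • (T (k + 1) f - T k f)) atTop (𝓝 g) ∧
      ‖g‖ ≤ M * ‖f‖ := by
  have hM : 0 ≤ M := (norm_nonneg _).trans (hc 0)
  have hblock : ∀ a b, ∑ k ∈ Ioc a b, c k • (T (k + 1) f - T k f) =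
      (∑ k ∈ Ioc a b, c k • (T (k + 1) - T k)) f := by
    simp
  have htail :
      Tendsto (fun j => eLpNorm (fun y => M * (1 - ψ j y) * ‖F f y‖) p ν) atTop (𝓝 0) := by
    refine tendsto_eLpNorm_zero_of_dominated (zero_lt_one.trans_le Fact.out).ne' hp
      (fun j => ?_) ((Lp.memLp (F f)).norm.const_mul M) (fun j => ?_) ?_
    · exact ((measurable_const.mul (measurable_const.sub (hψ_meas j))).aestronglyMeasurable).mul
        (Lp.aestronglyMeasurable (F f)).norm
    · refine Eventually.of_forall fun y => ?_
      have h1 : 0 ≤ 1 - ψ j y := sub_nonneg.2 (hψ_le_one j y)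
      rw [Real.norm_of_nonneg (by positivity)]
      exact mul_le_mul_of_nonneg_right
        (mul_le_of_le_one_right hM (by linarith [hψ_nonneg j y])) (norm_nonneg _)
    · refine Eventually.of_forall fun y => ?_
      simpa using (((hψ_lim y).const_sub 1).const_mul M).mul_const ‖F f y‖
  have hcauchy : CauchySeq fun N => ∑ k ∈ Ioc 0 N, c k • (T (k + 1) f - T k f) := by
    refine cauchySeq_sum_Ioc_of_enorm_le (htail.comp (tendsto_add_atTop_nat 1)) fun a b => ?_
    obtain ⟨m, hm, hm_le⟩ := exists_isMultiplier_sum_Ioc_smul_sub hT hψ_mono hψ_le_one hc a b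
    rw [hblock]
    exact hm.enorm_le hm_le f
  obtain ⟨g, hg⟩ := cauchySeq_tendsto_of_complete hcauchy
  refine ⟨g, hg, le_of_tendsto hg.norm (Eventually.of_forall fun N => ?_)⟩
  obtain ⟨m, hm, hm_le⟩ := exists_isMultiplier_sum_Ioc_smul_sub hT hψ_mono hψ_le_one hc 0 N
  rw [hblock]
  exact hm.norm_le
    (fun y => (hm_le y).trans (mul_le_of_le_one_right hM (by linarith [hψ_nonneg 1 y]))) f

end BlockSums

end Multiplier

theorem fejerSymbol_nonneg (m : ℕ) (x : ℝ) : 0 ≤ fejerSymbol m x := le_max_left _ _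

theorem fejerSymbol_le_one (m : ℕ) (x : ℝ) : fejerSymbol m x ≤ 1 :=
  max_le zero_le_one (sub_le_self _ (by positivity))

theorem fejerSymbol_mono (x : ℝ) : Monotone (fejerSymbol · x) := fun a b hab => by
  have hab' : (a : ℝ) + 1 ≤ b + 1 := by exact_mod_cast Nat.add_le_add_right hab 1
  exact max_le_max le_rfl
    (sub_le_sub_left (div_le_div_of_nonneg_left (abs_nonneg x) (by positivity) hab') 1)

theorem continuous_fejerSymbol (m : ℕ) : Continuous (fejerSymbol m) := by
  unfold fejerSymbol
  fun_prop

theorem tendsto_fejerSymbol (x : ℝ) : Tendsto (fejerSymbol · x) atTop (𝓝 1) := by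
  have h : Tendsto (fun m : ℕ => |x| * (1 / ((m : ℝ) + 1))) atTop (𝓝 0) := by
    simpa using tendsto_one_div_add_atTop_nhds_zero_nat.const_mul |x|
  simpa [fejerSymbol, div_eq_mul_inv] using
    (tendsto_const_nhds (x := (0 : ℝ))).max ((tendsto_const_nhds (x := (1 : ℝ))).sub h)

theorem pos_of_lacunary {n : ℕ → ℕ} {α : ℝ} (hα : 1 < α) (hlac : ∀ k, α ≤ (n (k + 1) : ℝ) / n k)
    (k : ℕ) : 0 < n k := by
  by_contra! h
  have := hlac k
  -- with `n k = 0` the ratio is the junk value `x / 0 = 0`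
  simp [Nat.le_zero.1 h] at this
  linarith

theorem strictMono_of_lacunary {n : ℕ → ℕ} {α : ℝ} (hα : 1 < α)
    (hlac : ∀ k, α ≤ (n (k + 1) : ℝ) / n k) : StrictMono n := by
  refine strictMono_nat_of_lt_succ fun k => ?_
  have hk : (0 : ℝ) < n k := by exact_mod_cast pos_of_lacunary hα hlac k
  have := (le_div_iff₀ hk).1 (hlac k)
  exact_mod_cast (lt_mul_of_one_lt_left hk hα).trans_le this

theorem stmt_8_general
    (n : ℕ → ℕ) (α : ℝ) (hα : 1 < α)
    (hlac : ∀ k, α ≤ (n (k + 1) : ℝ) / (n k : ℝ))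
    -- `F` is the Plancherel (Fourier) transform on `L²(ℝ)`.
    (F : Lp ℂ 2 (volume : Measure ℝ) ≃ₗᵢ[ℂ] Lp ℂ 2 (volume : Measure ℝ))
    -- `σ m` is the Fejér mean: the Fourier multiplier with symbol `fejerSymbol m`.
    (σ : ℕ → (Lp ℂ 2 (volume : Measure ℝ) →ₗ[ℂ] Lp ℂ 2 (volume : Measure ℝ)))
    (hσ : ∀ m f, (F (σ m f) : ℝ → ℂ) =ᵐ[volume]
      fun x => (fejerSymbol m x : ℂ) * (F f : ℝ → ℂ) x) :
    ∃ C : ℝ, ∀ c : ℕ → ℂ, (∃ M, ∀ k, ‖c k‖ ≤ M) →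
      ∀ f : Lp ℂ 2 (volume : Measure ℝ),
        ∃ g : Lp ℂ 2 (volume : Measure ℝ),
          Filter.Tendsto
            (fun N => ∑ k ∈ Finset.Icc 1 N, c k • (σ (n (k + 1)) f - σ (n k) f))
            Filter.atTop (nhds g) ∧
          ‖g‖ ≤ C * (⨆ k, ‖c k‖) * ‖f‖ := by
  refine ⟨1, fun c ⟨M, hM⟩ f => ?_⟩
  have hn := strictMono_of_lacunary hα hlac
  have hc : ∀ k, ‖c k‖ ≤ ⨆ k, ‖c k‖ := le_ciSup ⟨M, Set.forall_mem_range.2 hM⟩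
  obtain ⟨g, hg, hg_le⟩ := exists_tendsto_sum_Ioc_smul_sub (F := F.toLinearIsometry)
    (T := fun k => σ (n k)) (ψ := fun k => fejerSymbol (n k)) (fun k => hσ (n k))
    (fun x => (fejerSymbol_mono x).comp hn.monotone) (fun _ _ => fejerSymbol_le_one _ _)
    hc ENNReal.ofNat_ne_top (fun _ _ => fejerSymbol_nonneg _ _)
    (fun k => (continuous_fejerSymbol (n k)).measurable)
    (fun x => (tendsto_fejerSymbol x).comp hn.tendsto_atTop) f
  refine ⟨g, ?_, by rwa [one_mul]⟩
  simpa only [← Icc_add_one_left_eq_Ioc, zero_add] using hg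

theorem stmt_8
    (n : ℕ → ℕ) (hn : ∀ k, 0 < n k) (α : ℝ) (hα : 1 < α)
    (hlac : ∀ k, α ≤ (n (k + 1) : ℝ) / (n k : ℝ))
    -- `F` is the Plancherel (Fourier) transform on `L²(ℝ)`.
    (F : Lp ℂ 2 (volume : Measure ℝ) ≃ₗᵢ[ℂ] Lp ℂ 2 (volume : Measure ℝ))
    (hF : ∀ f : Lp ℂ 2 (volume : Measure ℝ), Integrable f volume →
      (F f : ℝ → ℂ) =ᵐ[volume] VectorFourier.fourierIntegral Real.fourierChar volume (innerₗ ℝ) (f : ℝ → ℂ))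
    -- `σ m` is the Fejér mean: the Fourier multiplier with symbol `fejerSymbol m`.
    (σ : ℕ → (Lp ℂ 2 (volume : Measure ℝ) →ₗ[ℂ] Lp ℂ 2 (volume : Measure ℝ)))
    (hσ : ∀ m f, (F (σ m f) : ℝ → ℂ) =ᵐ[volume]
      fun x => (fejerSymbol m x : ℂ) * (F f : ℝ → ℂ) x) :
    ∃ C : ℝ, ∀ c : ℕ → ℂ, (∃ M, ∀ k, ‖c k‖ ≤ M) →
      ∀ f : Lp ℂ 2 (volume : Measure ℝ),
        ∃ g : Lp ℂ 2 (volume : Measure ℝ),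
          Filter.Tendsto
            (fun N => ∑ k ∈ Finset.Icc 1 N, c k • (σ (n (k + 1)) f - σ (n k) f))
            Filter.atTop (nhds g) ∧
          ‖g‖ ≤ C * (⨆ k, ‖c k‖) * ‖f‖ :=
  stmt_8_general n α hα hlac F σ hσ
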